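/- arXiv:1704.08480 — 11 statements merged into one kernel-verified Lean document; each statement's English description precedes it below -/
import Mathlib

section
/- For every normalized cost function C : 2^M → ℝ≥0 on a finite ground set M partitioned into disjoint parts M_1,…,M_n, there is a unique normalized function P_C (the potential function) satisfying: for every allocation S = (S_1,…,S_n) with S_i ⊆ M_i, the sum over all players i of [P_C(S) − P_C(S with S_i replaced by ∅)] equals C(S_1 ∪ … ∪ S_n). Moreover, P_C is given explicitly by P_C(S) = Σ_{∅≠I⊆N} C(∪_{i∈I} S_i) / (|I| · binom(n,|I|)). -/
/-!
Write `g I = C (⋃ i ∈ I, S i)` for coalitions `I ⊆ N`. The potential is `Φ g = ∑ I, w |I| * g I`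
with `w k = 1 / (k * (n choose k))`, and emptying `S i` replaces `g` by `g ∘ erase i`. Double
counting the pairs `(I, i)` with `i ∈ I` turns `∑ i, (Φ g - Φ (g ∘ erase i))` into
`∑ J, (|J| * w |J| - (n - |J|) * w (|J| + 1)) * g J`, and `(k + 1) * (n choose (k + 1)) =
(n - k) * (n choose k)` kills every coefficient except `+1` at `J = N` and `-1` at `J = ∅`.

For uniqueness, the difference `D` of two solutions satisfies `|{i | S i ≠ ∅}| * D S = 0` as soon
as `D` vanishes on allocations with smaller support, so strong induction on the support gives
`D = 0`.
-/

open Finset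

variable {α : Type*}

noncomputable def potential [DecidableEq α] (n : ℕ)
    (C : Finset α → ℝ) (S : Fin n → Finset α) : ℝ :=
  ∑ I ∈ (univ : Finset (Fin n)).powerset.filter (· ≠ ∅),
    C (I.biUnion S) / ((I.card : ℝ) * (n.choose I.card : ℝ))

theorem Finset.biUnion_update_empty [DecidableEq α] {ι : Type*} [DecidableEq ι]
    (S : ι → Finset α) (i : ι) (I : Finset ι) :
    I.biUnion (Function.update S i ∅) = (I.erase i).biUnion S := by
  ext a
  simp only [mem_biUnion, mem_erase, Function.update_apply]
  grind

theorem Finset.sum_sum_erase_eq_sum_sum_compl {ι β : Type*} [Fintype ι] [DecidableEq ι]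
    [AddCommMonoid β] (f : Finset ι → ι → β) :
    ∑ I, ∑ i ∈ I, f (I.erase i) i = ∑ J, ∑ i ∈ Jᶜ, f J i := by
  rw [sum_sigma', sum_sigma']
  refine sum_nbij' (fun p ↦ ⟨p.1.erase p.2, p.2⟩) (fun p ↦ ⟨insert p.2 p.1, p.2⟩)
    ?_ ?_ ?_ ?_ ?_ <;> simp +contextual [insert_erase]

theorem eq_zero_of_sum_sub_update_eq_zero {ι β R : Type*} [Fintype ι] [DecidableEq ι]
    [Field R] [CharZero R] {p : (ι → β) → Prop} (b : β)
    (hp : ∀ S i, p S → p (Function.update S i b)) (D : (ι → β) → R)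
    (h0 : D (fun _ ↦ b) = 0) (hD : ∀ S, p S → ∑ i, (D S - D (Function.update S i b)) = 0) :
    ∀ S, p S → D S = 0 := by
  suffices ∀ F : Finset ι, ∀ S, p S → (∀ i ∉ F, S i = b) → D S = 0 from
    fun S hS ↦ this univ S hS (by simp)
  intro F
  induction F using Finset.strongInduction with
  | H F ih =>
  intro S hS hF
  obtain rfl | hne := F.eq_empty_or_nonempty
  · rw [show S = fun _ ↦ b from funext fun i ↦ hF i (notMem_empty i), h0]
  have hupd : ∀ i, D (Function.update S i b) = if i ∈ F then 0 else D S := by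
    intro i
    split_ifs with hi
    · refine ih _ (erase_ssubset hi) _ (hp S i hS) fun j hj ↦ ?_
      rw [Function.update_apply]
      split_ifs with hji
      · rfl
      · exact hF j (by simp_all)
    · rw [Function.update_eq_self_iff.mpr (hF i hi).symm]
  have : (#F : R) * D S = 0 := by
    rw [← hD S hS]
    simp [hupd, sub_ite, sum_ite_mem]
  simpa [hne.ne_empty] using this

-- `potentialWeight n 0 = 0` because `0⁻¹ = 0`, so the empty coalition never contributes.
noncomputable def potentialWeight (n k : ℕ) : ℝ := ((k : ℝ) * n.choose k)⁻¹

theorem natCast_mul_potentialWeight_sub {n k : ℕ} (hk : k ≤ n) :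
    k * potentialWeight n k - (n - k : ℕ) * potentialWeight n (k + 1) =
      (if k = n then 1 else 0) - (if k = 0 then 1 else 0) := by
  rcases hk.eq_or_lt with rfl | hlt
  · obtain rfl | hk := k.eq_zero_or_pos
    · simp
    · simp [potentialWeight, hk.ne']
  have hchoose : ((k + 1 : ℕ) : ℝ) * n.choose (k + 1) = (n - k : ℕ) * n.choose k := by
    rw [mul_comm, ← Nat.cast_mul, ← Nat.cast_mul, Nat.choose_succ_right_eq, mul_comm]
  have hnk : ((n - k : ℕ) : ℝ) ≠ 0 := Nat.cast_ne_zero.mpr (Nat.sub_ne_zero_of_lt hlt)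
  rw [potentialWeight, potentialWeight, hchoose, if_neg hlt.ne, mul_inv, mul_inv, ← mul_assoc,
    ← mul_assoc, mul_inv_cancel₀ hnk, one_mul]
  obtain rfl | hk := k.eq_zero_or_pos
  · simp
  · simp [hk.ne']

theorem sum_sub_sum_potentialWeight_erase {n : ℕ} (g : Finset (Fin n) → ℝ) :
    ∑ i, (∑ I, potentialWeight n #I * g I - ∑ I, potentialWeight n #I * g (I.erase i)) =
      g univ - g ∅ := by
  have hlocal : ∀ I : Finset (Fin n),
      ∑ i, (g I - g (I.erase i)) = #I * g I - ∑ i ∈ I, g (I.erase i) := by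
    intro I
    rw [← sum_subset (subset_univ I) fun i _ hi ↦ by rw [erase_eq_of_notMem hi, sub_self],
      sum_sub_distrib, sum_const, nsmul_eq_mul]
  calc _ = ∑ I : Finset (Fin n), potentialWeight n #I * ∑ i, (g I - g (I.erase i)) := by
        simp_rw [← sum_sub_distrib, mul_sum, mul_sub]
        exact sum_comm
    _ = ∑ I : Finset (Fin n), #I * potentialWeight n #I * g I -
          ∑ I : Finset (Fin n), ∑ i ∈ I, potentialWeight n (#(I.erase i) + 1) * g (I.erase i) := by
        simp_rw [hlocal, mul_sub, sum_sub_distrib, mul_sum]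
        congr 1
        · exact sum_congr rfl fun _ _ ↦ by ring
        · refine sum_congr rfl fun I _ ↦ sum_congr rfl fun i hi ↦ ?_
          rw [card_erase_add_one hi]
    _ = ∑ J : Finset (Fin n),
          (#J * potentialWeight n #J - #Jᶜ * potentialWeight n (#J + 1)) * g J := by
        simp_rw [sum_sum_erase_eq_sum_sum_compl (fun J _ ↦ potentialWeight n (#J + 1) * g J),
          sum_const, nsmul_eq_mul, sub_mul, sum_sub_distrib, mul_assoc]
    _ = ∑ J : Finset (Fin n), ((if J = univ then 1 else 0) - (if J = ∅ then 1 else 0)) * g J := by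
        refine sum_congr rfl fun J _ ↦ ?_
        have huniv : #J = n ↔ J = univ := by rw [← card_eq_iff_eq_univ, Fintype.card_fin]
        rw [card_compl, Fintype.card_fin,
          natCast_mul_potentialWeight_sub (by simpa using card_le_univ J)]
        simp only [huniv, card_eq_zero]
    _ = g univ - g ∅ := by simp [sub_mul, sum_sub_distrib]

theorem potential_eq_sum_potentialWeight [DecidableEq α] (n : ℕ) (C : Finset α → ℝ)
    (S : Fin n → Finset α) :
    potential n C S = ∑ I : Finset (Fin n), potentialWeight n #I * C (I.biUnion S) := by
  rw [potential, powerset_univ, sum_filter_of_ne fun I _ h ↦ ?_]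
  · simp only [potentialWeight, div_eq_inv_mul]
  · rintro rfl
    simp at h

theorem potential_const_empty [DecidableEq α] (n : ℕ) {C : Finset α → ℝ} (hC0 : C ∅ = 0) :
    potential n C (fun _ ↦ ∅) = 0 := by
  have hunion : ∀ I : Finset (Fin n), I.biUnion (fun _ ↦ (∅ : Finset α)) = ∅ := fun I ↦
    eq_empty_of_forall_notMem fun a ↦ by simp
  simp [potential_eq_sum_potentialWeight, hunion, hC0]

theorem sum_sub_potential_update [DecidableEq α] (n : ℕ) {C : Finset α → ℝ} (hC0 : C ∅ = 0)
    (S : Fin n → Finset α) :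
    ∑ i, (potential n C S - potential n C (Function.update S i ∅)) = C (univ.biUnion S) := by
  simp_rw [potential_eq_sum_potentialWeight, biUnion_update_empty,
    sum_sub_sum_potentialWeight_erase fun I ↦ C (I.biUnion S), biUnion_empty, hC0, sub_zero]

theorem stmt0_general [DecidableEq α] (n : ℕ) (M : Fin n → Finset α)
    (C : Finset α → ℝ) (hC0 : C ∅ = 0) :
    (potential n C (fun _ => ∅) = 0 ∧
      ∀ S : Fin n → Finset α, (∀ i, S i ⊆ M i) →
        ∑ i, (potential n C S - potential n C (Function.update S i ∅)) =
          C (univ.biUnion S)) ∧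
    ∀ P Q : (Fin n → Finset α) → ℝ,
      (P (fun _ => ∅) = 0 ∧ ∀ S : Fin n → Finset α, (∀ i, S i ⊆ M i) →
        ∑ i, (P S - P (Function.update S i ∅)) = C (univ.biUnion S)) →
      (Q (fun _ => ∅) = 0 ∧ ∀ S : Fin n → Finset α, (∀ i, S i ⊆ M i) →
        ∑ i, (Q S - Q (Function.update S i ∅)) = C (univ.biUnion S)) →
      ∀ S : Fin n → Finset α, (∀ i, S i ⊆ M i) → P S = Q S := by
  refine ⟨⟨potential_const_empty n hC0, fun S _ ↦ sum_sub_potential_update n hC0 S⟩, ?_⟩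
  rintro P Q ⟨hP0, hP⟩ ⟨hQ0, hQ⟩ S hS
  have hadmissible : ∀ (S : Fin n → Finset α) i, (∀ j, S j ⊆ M j) →
      ∀ j, Function.update S i ∅ j ⊆ M j := by
    intro S i hS j
    rw [Function.update_apply]
    split_ifs
    exacts [empty_subset _, hS j]
  refine sub_eq_zero.mp <| eq_zero_of_sum_sub_update_eq_zero ∅ hadmissible (P - Q)
    (by simp [hP0, hQ0]) (fun S hS ↦ ?_) S hS
  simp only [Pi.sub_apply, sum_sub_distrib] at hP hQ ⊢
  linear_combination hP S hS - hQ S hS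

theorem stmt0 [DecidableEq α] (n : ℕ) (M : Fin n → Finset α)
    (hM : ∀ i j : Fin n, i ≠ j → Disjoint (M i) (M j))
    (C : Finset α → ℝ) (hC0 : C ∅ = 0) (hCnn : ∀ S, 0 ≤ C S) :
    (potential n C (fun _ => ∅) = 0 ∧
      ∀ S : Fin n → Finset α, (∀ i, S i ⊆ M i) →
        ∑ i, (potential n C S - potential n C (Function.update S i ∅)) =
          C (univ.biUnion S)) ∧
    ∀ P Q : (Fin n → Finset α) → ℝ,
      (P (fun _ => ∅) = 0 ∧ ∀ S : Fin n → Finset α, (∀ i, S i ⊆ M i) →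
        ∑ i, (P S - P (Function.update S i ∅)) = C (univ.biUnion S)) →
      (Q (fun _ => ∅) = 0 ∧ ∀ S : Fin n → Finset α, (∀ i, S i ⊆ M i) →
        ∑ i, (Q S - Q (Function.update S i ∅)) = C (univ.biUnion S)) →
      ∀ S : Fin n → Finset α, (∀ i, S i ⊆ M i) → P S = Q S :=
  stmt0_general n M C hC0
end

section
/- If C : 2^M → ℝ≥0 is submodular then its potential function P_C is submodular: for all allocations S, T, P_C(S) + P_C(T) ≥ P_C(S ∪ T) + P_C(S ∩ T), where union and intersection are taken componentwise. -/
open Finset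

variable {α : Type*}

/-! Every coalition `I` contributes `C (⋃_{i∈I} S i)` with a nonnegative weight, so it suffices to
check the submodularity inequality coalition by coalition. Componentwise union commutes with
`⋃_{i∈I}` outright, and so does componentwise intersection because `S i ∩ T j = ∅` for `i ≠ j`
(the `M i` are disjoint); the inequality for `I` is then submodularity of `C`. -/

namespace Finset

variable {ι : Type*} [DecidableEq α]

lemma biUnion_inter_of_disjoint {I : Finset ι} {S T : ι → Finset α}
    (h : ∀ i ∈ I, ∀ j ∈ I, i ≠ j → Disjoint (S i) (T j)) :
    I.biUnion (fun i => S i ∩ T i) = I.biUnion S ∩ I.biUnion T := by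
  ext x
  simp only [mem_biUnion, mem_inter]
  constructor
  · rintro ⟨i, hi, hxS, hxT⟩
    exact ⟨⟨i, hi, hxS⟩, i, hi, hxT⟩
  · rintro ⟨⟨i, hi, hxS⟩, j, hj, hxT⟩
    obtain rfl : i = j := by
      by_contra hij
      exact disjoint_left.1 (h i hi j hj hij) hxS hxT
    exact ⟨i, hi, hxS, hxT⟩

end Finset

lemma potential_add_le_of_forall_biUnion [DecidableEq α] {n : ℕ} {C : Finset α → ℝ}
    {A B S T : Fin n → Finset α}
    (h : ∀ I : Finset (Fin n),
      C (I.biUnion A) + C (I.biUnion B) ≤ C (I.biUnion S) + C (I.biUnion T)) :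
    potential n C A + potential n C B ≤ potential n C S + potential n C T := by
  simp only [potential, ← sum_add_distrib, ← add_div]
  exact sum_le_sum fun I _ => div_le_div_of_nonneg_right (h I) (by positivity)

theorem stmt2_general [DecidableEq α] (n : ℕ) (M : Fin n → Finset α)
    (hM : ∀ i j : Fin n, i ≠ j → Disjoint (M i) (M j))
    (C : Finset α → ℝ)
    (hCsub : ∀ S T : Finset α, C (S ∪ T) + C (S ∩ T) ≤ C S + C T)
    (S T : Fin n → Finset α) (hS : ∀ i, S i ⊆ M i) (hT : ∀ i, T i ⊆ M i) :
    potential n C (fun i => S i ∪ T i) + potential n C (fun i => S i ∩ T i) ≤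
      potential n C S + potential n C T := by
  refine potential_add_le_of_forall_biUnion fun I => ?_
  have hST : ∀ i ∈ I, ∀ j ∈ I, i ≠ j → Disjoint (S i) (T j) :=
    fun i _ j _ hij => (hM i j hij).mono (hS i) (hT j)
  rw [biUnion_union, biUnion_inter_of_disjoint hST]
  exact hCsub _ _

theorem stmt2 [DecidableEq α] (n : ℕ) (M : Fin n → Finset α)
    (hM : ∀ i j : Fin n, i ≠ j → Disjoint (M i) (M j))
    (C : Finset α → ℝ) (hCnn : ∀ S, 0 ≤ C S)
    (hCsub : ∀ S T : Finset α, C (S ∪ T) + C (S ∩ T) ≤ C S + C T)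
    (S T : Fin n → Finset α) (hS : ∀ i, S i ⊆ M i) (hT : ∀ i, T i ⊆ M i) :
    potential n C (fun i => S i ∪ T i) + potential n C (fun i => S i ∩ T i) ≤
      potential n C S + potential n C T :=
  stmt2_general n M hM C hCsub S T hS hT
end

section
/- If C : 2^M → ℝ≥0 is a monotone XOS cost function, then for every allocation S, the potential function satisfies P_C(S) ≥ C(S). -/
/-!
Let `a r` be an additive function attaining the maximum in `C(⋃ Sᵢ)`. For disjoint `Sᵢ` with
`wᵢ = a r (Sᵢ)`, the potential of `a r` is `∑ᵢ wᵢ ∑_{I ∋ i} 1 / (|I| binom(n, |I|))`, and the inner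
sum is `1`: `i` lies in `binom(n-1, k-1)` sets of size `k` and `k binom(n, k) = n binom(n-1, k-1)`,
so each of the `n` sizes contributes `1/n`. Hence `P_{a r}(S) = C(⋃ Sᵢ)`, and `P_{a r}(S) ≤ P_C(S)`
because `a r ≤ C` and the potential is monotone in the cost function.
-/

open Finset

variable {α : Type*}

open Function

lemma sum_inv_card_mul_choose_filter_mem {n : ℕ} (i : Fin n) :
    ∑ I ∈ (univ : Finset (Fin n)).powerset.filter (i ∈ ·),
      ((I.card : ℝ) * (n.choose I.card : ℝ))⁻¹ = 1 := by
  obtain ⟨m, rfl⟩ : ∃ m, n = m + 1 := Nat.exists_eq_add_one_of_ne_zero i.pos.ne'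
  have hi : i ∉ univ.erase i := notMem_erase i univ
  rw [sum_filter, ← insert_erase (mem_univ i), sum_powerset_insert hi]
  have hcard : (univ.erase i).card = m := by simp
  calc
    _ = ∑ J ∈ (univ.erase i).powerset,
          (((J.card : ℝ) + 1) * ((m + 1).choose (J.card + 1) : ℝ))⁻¹ := by
      have hnot : ∀ J ∈ (univ.erase i).powerset, i ∉ J :=
        fun J hJ hiJ => hi (mem_powerset.1 hJ hiJ)
      rw [sum_eq_zero fun J hJ => if_neg (hnot J hJ), zero_add]
      refine sum_congr rfl fun J hJ => ?_
      rw [if_pos (mem_insert_self i J), card_insert_of_notMem (hnot J hJ)]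
      push_cast
      rfl
    _ = ∑ k ∈ range (m + 1), m.choose k • (((k : ℝ) + 1) * ((m + 1).choose (k + 1) : ℝ))⁻¹ := by
      rw [sum_powerset_apply_card
        (fun k => (((k : ℝ) + 1) * ((m + 1).choose (k + 1) : ℝ))⁻¹), hcard]
    _ = ∑ k ∈ range (m + 1), ((m : ℝ) + 1)⁻¹ := by
      refine sum_congr rfl fun k hkm => ?_
      have hk : 0 < m.choose k := Nat.choose_pos (by simpa [Nat.lt_succ_iff] using hkm)
      have hchoose :
          ((k : ℝ) + 1) * ((m + 1).choose (k + 1) : ℝ) = ((m : ℝ) + 1) * m.choose k := by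
        exact_mod_cast (mul_comm _ _).trans (Nat.add_one_mul_choose_eq m k).symm
      rw [nsmul_eq_mul, hchoose]
      field_simp
    _ = 1 := by
      rw [sum_const, card_range, nsmul_eq_mul]
      push_cast
      field_simp

lemma sum_sum_div_card_mul_choose {n : ℕ} (w : Fin n → ℝ) :
    ∑ I ∈ (univ : Finset (Fin n)).powerset.filter (· ≠ ∅),
      (∑ i ∈ I, w i) / ((I.card : ℝ) * (n.choose I.card : ℝ)) = ∑ i, w i := by
  rw [sum_filter_of_ne (p := (· ≠ ∅)) fun I _ h hI => h (by simp [hI])]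
  simp_rw [sum_div]
  rw [sum_comm' (t' := univ) (s' := fun i => (univ : Finset (Fin n)).powerset.filter (i ∈ ·))
    (by simp)]
  refine sum_congr rfl fun i _ => ?_
  simp_rw [div_eq_mul_inv]
  rw [← mul_sum, sum_inv_card_mul_choose_filter_mem, mul_one]

lemma potential_mono [DecidableEq α] {n : ℕ} {C D : Finset α → ℝ} (h : ∀ T, C T ≤ D T)
    (S : Fin n → Finset α) : potential n C S ≤ potential n D S :=
  sum_le_sum fun _ _ => div_le_div_of_nonneg_right (h _) (by positivity)

lemma potential_sum_eq_of_pairwise_disjoint [DecidableEq α] {n : ℕ} (w : α → ℝ)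
    {S : Fin n → Finset α} (hS : Pairwise (Disjoint on S)) :
    potential n (fun T => ∑ x ∈ T, w x) S = ∑ x ∈ univ.biUnion S, w x := by
  have hsplit : ∀ I : Finset (Fin n), ∑ x ∈ I.biUnion S, w x = ∑ i ∈ I, ∑ x ∈ S i, w x :=
    fun I => sum_biUnion (hS.set_pairwise _)
  simp only [potential, hsplit]
  exact sum_sum_div_card_mul_choose _

theorem stmt5_general [DecidableEq α] (n : ℕ) (M : Fin n → Finset α)
    (hM : ∀ i j : Fin n, i ≠ j → Disjoint (M i) (M j))
    (C : Finset α → ℝ)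
    (t : ℕ) (ht : 0 < t) (a : Fin t → α → ℝ)
    (hxos : ∀ S : Finset α, C S =
      (univ : Finset (Fin t)).sup' ⟨⟨0, ht⟩, mem_univ _⟩ (fun r => ∑ x ∈ S, a r x))
    (S : Fin n → Finset α) (hS : ∀ i, S i ⊆ M i) :
    C (univ.biUnion S) ≤ potential n C S := by
  obtain ⟨r, -, hr⟩ := exists_mem_eq_sup' ⟨⟨0, ht⟩, mem_univ _⟩
    (fun r => ∑ x ∈ univ.biUnion S, a r x)
  have hdisj : Pairwise (Disjoint on S) := fun i j hij => (hM i j hij).mono (hS i) (hS j)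
  calc C (univ.biUnion S) = ∑ x ∈ univ.biUnion S, a r x := by rw [hxos, hr]
    _ = potential n (fun T => ∑ x ∈ T, a r x) S :=
      (potential_sum_eq_of_pairwise_disjoint _ hdisj).symm
    _ ≤ potential n C S :=
      potential_mono (fun T => by
        rw [hxos]
        exact le_sup' (fun r => ∑ x ∈ T, a r x) (mem_univ r)) S

theorem stmt5 [DecidableEq α] (n : ℕ) (M : Fin n → Finset α)
    (hM : ∀ i j : Fin n, i ≠ j → Disjoint (M i) (M j))
    (C : Finset α → ℝ)
    (hmono : ∀ S T : Finset α, S ⊆ T → C S ≤ C T)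
    (t : ℕ) (ht : 0 < t) (a : Fin t → α → ℝ) (ha : ∀ r x, 0 ≤ a r x)
    (hxos : ∀ S : Finset α, C S =
      (univ : Finset (Fin t)).sup' ⟨⟨0, ht⟩, mem_univ _⟩ (fun r => ∑ x ∈ S, a r x))
    (S : Fin n → Finset α) (hS : ∀ i, S i ⊆ M i) :
    C (univ.biUnion S) ≤ potential n C S :=
  stmt5_general n M hM C t ht a hxos S hS
end

section
/- If C : 2^M → ℝ≥0 is a monotone normalized subadditive cost function, then for every allocation S, the potential function satisfies P_C(S) ≥ C(S)/2. -/
/-!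
Pair every coalition `I ⊆ N` with its complement. Subadditivity gives
`C(S_I) + C(S_{Iᶜ}) ≥ C(S_N)`, and since `|I|, |Iᶜ| ≤ n` and `binom(n, |I|) = binom(n, |Iᶜ|)`,
both terms of the pair carry weight at least `1 / (n · binom(n, |I|))`. Summing over all `I`,
`2 P_C(S) ≥ C(S_N) / n · ∑_I 1 / binom(n, |I|) = (n + 1) / n · C(S_N) ≥ C(S_N)`.
-/

open Finset

variable {α : Type*}

theorem Finset.sum_powerset_inv_choose_card {ι : Type*} (s : Finset ι) :
    ∑ t ∈ s.powerset, ((#s).choose #t : ℝ)⁻¹ = #s + 1 := by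
  rw [sum_powerset_apply_card (fun k => ((#s).choose k : ℝ)⁻¹)]
  have hterm : ∀ k ∈ range (#s + 1), (#s).choose k • ((#s).choose k : ℝ)⁻¹ = 1 := by
    intro k hk
    have hpos : ((#s).choose k : ℝ) ≠ 0 :=
      Nat.cast_ne_zero.2 (Nat.choose_pos (Nat.lt_succ_iff.1 (mem_range.1 hk))).ne'
    rw [nsmul_eq_mul, mul_inv_cancel₀ hpos]
  rw [sum_congr rfl hterm, sum_const, card_range, nsmul_one, Nat.cast_succ]

noncomputable def potentialTerm [DecidableEq α] (n : ℕ) (C : Finset α → ℝ)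
    (S : Fin n → Finset α) (I : Finset (Fin n)) : ℝ :=
  C (I.biUnion S) / (#I * n.choose #I)

section Potential

variable [DecidableEq α] {n : ℕ} {C : Finset α → ℝ}

theorem potential_eq_sum_potentialTerm (S : Fin n → Finset α) :
    potential n C S = ∑ I, potentialTerm n C S I := by
  rw [potential, ← powerset_univ]
  -- the term of `I = ∅` is `C ∅ / 0 = 0`
  exact sum_filter_of_ne fun I _ hI hI₀ => hI (by simp [hI₀])

theorem potential_nonneg (hCnn : ∀ S, 0 ≤ C S) (S : Fin n → Finset α) :
    0 ≤ potential n C S :=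
  sum_nonneg fun _ _ => div_nonneg (hCnn _) (by positivity)

theorem div_choose_card_le_mul_potentialTerm (hC0 : C ∅ = 0) (hCnn : ∀ S, 0 ≤ C S)
    (S : Fin n → Finset α) (I : Finset (Fin n)) :
    C (I.biUnion S) / n.choose #I ≤ n * potentialTerm n C S I := by
  rcases I.eq_empty_or_nonempty with rfl | hI
  · simp [potentialTerm, hC0]
  have hk : (0 : ℝ) < #I := by exact_mod_cast hI.card_pos
  have hkn : (#I : ℝ) ≤ n := by exact_mod_cast (card_le_univ I).trans_eq (Fintype.card_fin n)
  have hratio : 1 ≤ (n : ℝ) / #I := (one_le_div hk).2 hkn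
  have hterm : 0 ≤ C (I.biUnion S) / n.choose #I := div_nonneg (hCnn _) (by positivity)
  calc C (I.biUnion S) / n.choose #I ≤ (n / #I) * (C (I.biUnion S) / n.choose #I) :=
        le_mul_of_one_le_left hterm hratio
    _ = n * potentialTerm n C S I := by rw [potentialTerm]; ring

theorem choose_card_compl (I : Finset (Fin n)) : n.choose #Iᶜ = n.choose #I := by
  have hI : #I ≤ n := (card_le_univ I).trans_eq (Fintype.card_fin n)
  rw [card_compl, Fintype.card_fin, Nat.choose_symm hI]

theorem div_choose_card_le_mul_potentialTerm_add_compl (hC0 : C ∅ = 0) (hCnn : ∀ S, 0 ≤ C S)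
    (hsubadd : ∀ S T : Finset α, C (S ∪ T) ≤ C S + C T) (S : Fin n → Finset α)
    (I : Finset (Fin n)) :
    C (univ.biUnion S) / n.choose #I ≤
      n * (potentialTerm n C S I + potentialTerm n C S Iᶜ) := by
  have hsplit : C (univ.biUnion S) ≤ C (I.biUnion S) + C (Iᶜ.biUnion S) := by
    rw [← union_compl I, union_biUnion]
    exact hsubadd _ _
  calc C (univ.biUnion S) / n.choose #I
      ≤ C (I.biUnion S) / n.choose #I + C (Iᶜ.biUnion S) / n.choose #Iᶜ := by
        rw [choose_card_compl, ← add_div]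
        gcongr
    _ ≤ n * potentialTerm n C S I + n * potentialTerm n C S Iᶜ :=
        add_le_add (div_choose_card_le_mul_potentialTerm hC0 hCnn S I)
          (div_choose_card_le_mul_potentialTerm hC0 hCnn S Iᶜ)
    _ = n * (potentialTerm n C S I + potentialTerm n C S Iᶜ) := (mul_add _ _ _).symm

theorem succ_mul_le_two_mul_potential (hC0 : C ∅ = 0) (hCnn : ∀ S, 0 ≤ C S)
    (hsubadd : ∀ S T : Finset α, C (S ∪ T) ≤ C S + C T) (S : Fin n → Finset α) :
    (n + 1) * C (univ.biUnion S) ≤ 2 * n * potential n C S := by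
  have hweights : ∑ I : Finset (Fin n), (n.choose #I : ℝ)⁻¹ = n + 1 := by
    simpa [← powerset_univ] using sum_powerset_inv_choose_card (univ : Finset (Fin n))
  have hcompl : ∑ I, potentialTerm n C S Iᶜ = ∑ I, potentialTerm n C S I :=
    Fintype.sum_bijective compl compl_bijective _ _ fun _ => rfl
  calc (n + 1) * C (univ.biUnion S)
        = ∑ I : Finset (Fin n), C (univ.biUnion S) / n.choose #I := by
        simp only [div_eq_mul_inv, ← mul_sum, hweights, mul_comm]
    _ ≤ ∑ I, n * (potentialTerm n C S I + potentialTerm n C S Iᶜ) :=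
        sum_le_sum fun I _ =>
          div_choose_card_le_mul_potentialTerm_add_compl hC0 hCnn hsubadd S I
    _ = 2 * n * potential n C S := by
        rw [← mul_sum, sum_add_distrib, hcompl, potential_eq_sum_potentialTerm]
        ring

end Potential

theorem stmt6_general [DecidableEq α] (n : ℕ)
    (C : Finset α → ℝ) (hC0 : C ∅ = 0) (hCnn : ∀ S, 0 ≤ C S)
    (hsubadd : ∀ S T : Finset α, C (S ∪ T) ≤ C S + C T)
    (S : Fin n → Finset α) :
    C (univ.biUnion S) / 2 ≤ potential n C S := by
  rcases n.eq_zero_or_pos with rfl | hn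
  · simpa [hC0] using potential_nonneg hCnn S
  have hbound := succ_mul_le_two_mul_potential hC0 hCnn hsubadd S
  have hN := hCnn (univ.biUnion S)
  have hn' : (0 : ℝ) < n := by exact_mod_cast hn
  nlinarith

theorem stmt6 [DecidableEq α] (n : ℕ) (M : Fin n → Finset α)
    (hM : ∀ i j : Fin n, i ≠ j → Disjoint (M i) (M j))
    (C : Finset α → ℝ) (hC0 : C ∅ = 0) (hCnn : ∀ S, 0 ≤ C S)
    (hmono : ∀ S T : Finset α, S ⊆ T → C S ≤ C T)
    (hsubadd : ∀ S T : Finset α, C (S ∪ T) ≤ C S + C T)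
    (S : Fin n → Finset α) (hS : ∀ i, S i ⊆ M i) :
    C (univ.biUnion S) / 2 ≤ potential n C S :=
  stmt6_general n C hC0 hCnn hsubadd S
end

section
/- If C : 2^M → ℝ≥0 is a monotone cost function, then for every allocation S, the potential function satisfies P_C(S) ≤ H_n · C(S), where H_n = 1 + 1/2 + … + 1/n is the n-th harmonic number. -/
open Finset

variable {α : Type*}

theorem stmt7 [DecidableEq α] (n : ℕ) (M : Fin n → Finset α)
    (hM : ∀ i j : Fin n, i ≠ j → Disjoint (M i) (M j))
    (C : Finset α → ℝ) (hCnn : ∀ S, 0 ≤ C S)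
    (hmono : ∀ S T : Finset α, S ⊆ T → C S ≤ C T)
    (S : Fin n → Finset α) (hS : ∀ i, S i ⊆ M i) :
    potential n C S ≤ (∑ k ∈ Finset.range n, (1 : ℝ) / (k + 1)) * C (univ.biUnion S) := by
  set U := (univ : Finset (Fin n)).biUnion S with hU
  have key : potential n C S ≤
      ∑ I ∈ (univ : Finset (Fin n)).powerset.filter (· ≠ ∅),
        C U / ((I.card : ℝ) * (n.choose I.card : ℝ)) := by
    apply Finset.sum_le_sum
    intro I hI
    simp only [mem_filter, mem_powerset] at hI
    have hw : (0:ℝ) ≤ (I.card : ℝ) * (n.choose I.card : ℝ) := by positivity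
    have hsub : I.biUnion S ⊆ U :=
      biUnion_subset_biUnion_of_subset_left S (subset_univ I)
    gcongr
    exact hmono _ _ hsub
  refine key.trans ?_
  have h2 : ∑ I ∈ (univ : Finset (Fin n)).powerset.filter (· ≠ ∅),
        C U / ((I.card : ℝ) * (n.choose I.card : ℝ)) =
      ∑ I ∈ (univ : Finset (Fin n)).powerset,
        C U / ((I.card : ℝ) * (n.choose I.card : ℝ)) := by
    apply Finset.sum_filter_of_ne
    intro I hI hne
    rintro rfl
    simp at hne
  rw [h2, Finset.sum_powerset, card_univ, Fintype.card_fin]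
  have h3 : ∀ j ∈ Finset.range (n + 1),
      ∑ I ∈ (univ : Finset (Fin n)).powersetCard j,
          C U / ((I.card : ℝ) * (n.choose I.card : ℝ)) =
        (n.choose j : ℝ) * (C U / ((j : ℝ) * (n.choose j : ℝ))) := by
    intro j hj
    rw [Finset.sum_congr rfl (fun I hI => by
      rw [(Finset.mem_powersetCard.mp hI).2]), Finset.sum_const,
      Finset.card_powersetCard, card_univ, Fintype.card_fin, nsmul_eq_mul]
  rw [Finset.sum_congr rfl h3, Finset.sum_range_succ']
  simp only [Nat.cast_zero, zero_mul, div_zero, mul_zero, add_zero]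
  rw [Finset.sum_mul]
  apply le_of_eq
  apply Finset.sum_congr rfl
  intro k hk
  have hk' : k + 1 ≤ n := Finset.mem_range.mp hk
  have hch : 0 < n.choose (k + 1) := Nat.choose_pos hk'
  have hch' : ((n.choose (k + 1) : ℝ)) ≠ 0 := by positivity
  push_cast
  field_simp
end

section
/- Let H : 2^M → ℝ be a normalized function (H(∅)=0), and let T^1,…,T^n ⊆ M satisfy ⋂_{i=1}^n T^i = ∅. If H is supermodular, then Σ_{i=1}^n H(T^i) ≤ Σ_{i=1}^{n−1} H( T^{i+1} ∪ (⋂_{ℓ=1}^{i} T^ℓ) ). -/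
open Finset

variable {α : Type*}

lemma aux8 [DecidableEq α] [Fintype α]
    (H : Finset α → ℝ)
    (hsup : ∀ S T : Finset α, H S + H T ≤ H (S ∪ T) + H (S ∩ T))
    (T : ℕ → Finset α) : ∀ k : ℕ, 1 ≤ k →
    ∑ i ∈ Finset.range k, H (T i) ≤
      ∑ i ∈ Finset.range (k - 1), H (T (i + 1) ∪ (Finset.range (i + 1)).inf T)
        + H ((Finset.range k).inf T) := by
  intro k
  induction k with
  | zero => omega
  | succ k ih =>
    intro _
    rcases Nat.eq_zero_or_pos k with rfl | hk
    · simp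
    have ih' := ih hk
    rw [Finset.sum_range_succ]
    have hsucc : Nat.succ k - 1 = (k - 1) + 1 := by omega
    rw [hsucc, Finset.sum_range_succ]
    have hk1 : k - 1 + 1 = k := by omega
    rw [hk1]
    have key : H ((Finset.range k).inf T) + H (T k) ≤
        H (T k ∪ (Finset.range k).inf T) + H ((Finset.range (k+1)).inf T) := by
      have := hsup (T k) ((Finset.range k).inf T)
      calc H ((Finset.range k).inf T) + H (T k)
          = H (T k) + H ((Finset.range k).inf T) := by ring
        _ ≤ H (T k ∪ (Finset.range k).inf T) + H (T k ∩ (Finset.range k).inf T) := this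
        _ = _ := by
            rw [Finset.range_add_one, Finset.inf_insert]
            rfl
    linarith

theorem stmt8 [DecidableEq α] [Fintype α] (n : ℕ) (hn : 1 ≤ n)
    (H : Finset α → ℝ) (hH0 : H ∅ = 0)
    (hsup : ∀ S T : Finset α, H S + H T ≤ H (S ∪ T) + H (S ∩ T))
    (T : ℕ → Finset α) (hT : (Finset.range n).inf T = ∅) :
    ∑ i ∈ Finset.range n, H (T i) ≤
      ∑ i ∈ Finset.range (n - 1), H (T (i + 1) ∪ (Finset.range (i + 1)).inf T) := by
  have := aux8 H hsup T n hn
  rw [hT, hH0] at this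
  linarith
end

section
/- Let C be a monotone normalized XOS cost function and let ALG maximize Σ_i v_i(S_i) − P_C(S) over allocations S. Then for the welfare SW(S) = Σ_i v_i(S_i) − C(S) and any allocation OPT, SW(OPT) − SW(ALG) ≤ (H_n − 1) · C(OPT). -/
/-!
The potential weights `1 / (|I| · binom(n, |I|))` sum to `H_n` over the nonempty `I ⊆ [n]`,
and to `1` over the `I` containing a fixed player. The first fact and monotonicity give
`P_C(S) ≤ H_n · C(S)`. The second says the weights form a fractional cover of the players;
taking the additive function that attains the XOS maximum at `⋃ᵢ Sᵢ` and splitting it along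
this cover gives `C(S) ≤ P_C(S)` for disjoint `S`. Optimality of `ALG` for `v - P_C` then yields
`SW(OPT) - SW(ALG) ≤ P_C(OPT) - C(OPT) - (P_C(ALG) - C(ALG)) ≤ (H_n - 1) · C(OPT)`.
-/

open Finset

variable {α : Type*}

lemma potentialWeight_nonneg (n k : ℕ) : 0 ≤ potentialWeight n k := by
  unfold potentialWeight; positivity

lemma choose_mul_potentialWeight {n k : ℕ} (hk : k ≤ n) :
    (n.choose k : ℝ) * potentialWeight n k = (k : ℝ)⁻¹ := by
  have : (n.choose k : ℝ) ≠ 0 := by exact_mod_cast (Nat.choose_pos hk).ne'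
  rw [potentialWeight, mul_inv, mul_left_comm, mul_inv_cancel₀ this, mul_one]

lemma choose_mul_potentialWeight_succ {p m : ℕ} (hm : m ≤ p) :
    (p.choose m : ℝ) * potentialWeight (p + 1) (m + 1) = ((p : ℝ) + 1)⁻¹ := by
  have hchoose : ((m + 1 : ℕ) : ℝ) * (p + 1).choose (m + 1) = ((p : ℝ) + 1) * p.choose m := by
    exact_mod_cast (mul_comm _ _).trans (Nat.add_one_mul_choose_eq p m).symm
  have : (p.choose m : ℝ) ≠ 0 := by exact_mod_cast (Nat.choose_pos hm).ne'
  rw [potentialWeight, hchoose, mul_inv, mul_left_comm, mul_inv_cancel₀ this, mul_one]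

lemma sum_potentialWeight_eq_harmonic (n : ℕ) :
    ∑ I ∈ (univ : Finset (Fin n)).powerset.filter (· ≠ ∅), potentialWeight n #I =
      harmonic n := by
  rw [sum_filter_of_ne fun I _ h hI => by simp [hI, potentialWeight] at h,
    sum_powerset_apply_card (potentialWeight n), card_univ, Fintype.card_fin,
    sum_range_succ', harmonic]
  push_cast
  simp only [potentialWeight, Nat.cast_zero, zero_mul, inv_zero, smul_zero, add_zero, nsmul_eq_mul]
  refine sum_congr rfl fun k hk => ?_
  rw [← potentialWeight]
  exact_mod_cast choose_mul_potentialWeight (mem_range.1 hk)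

lemma sum_potentialWeight_filter_mem_eq_one {n : ℕ} (i : Fin n) :
    ∑ I ∈ (univ : Finset (Fin n)).powerset.filter (i ∈ ·), potentialWeight n #I = 1 := by
  obtain ⟨p, rfl⟩ : ∃ p, n = p + 1 := Nat.exists_eq_add_one.2 i.pos
  have hi : i ∉ univ.erase i := notMem_erase i univ
  -- The sets containing `i` are `insert i J` with `J` among the other `p` players, and each of
  -- the `p + 1` sizes of `J` contributes `binom(p, m) · w(p + 1, m + 1) = 1 / (p + 1)`.
  rw [sum_filter, ← insert_erase (mem_univ i), sum_powerset_insert hi,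
    sum_eq_zero fun J hJ => if_neg fun h => hi (mem_powerset.1 hJ h), zero_add]
  rw [sum_congr rfl fun J hJ => by
      rw [if_pos (mem_insert_self i J), card_insert_of_notMem fun h => hi (mem_powerset.1 hJ h)],
    sum_powerset_apply_card (fun m => potentialWeight (p + 1) (m + 1)),
    card_erase_of_mem (mem_univ i), card_univ, Fintype.card_fin, Nat.add_sub_cancel]
  simp only [nsmul_eq_mul]
  rw [sum_congr rfl fun m hm =>
      choose_mul_potentialWeight_succ (Nat.lt_succ_iff.1 (mem_range.1 hm)), sum_const,
    card_range, nsmul_eq_mul]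
  push_cast
  field_simp

lemma sum_le_sum_mul_of_fractional_cover {ι : Type*} [Fintype ι] [DecidableEq ι]
    (𝓘 : Finset (Finset ι)) (w : Finset ι → ℝ) (hw : ∀ I ∈ 𝓘, 0 ≤ w I)
    (hcover : ∀ i, ∑ I ∈ 𝓘.filter (i ∈ ·), w I = 1)
    (f : ι → ℝ) (g : Finset ι → ℝ) (hfg : ∀ I ∈ 𝓘, ∑ i ∈ I, f i ≤ g I) :
    ∑ i, f i ≤ ∑ I ∈ 𝓘, w I * g I :=
  calc ∑ i, f i = ∑ i, ∑ I ∈ 𝓘.filter (i ∈ ·), w I * f i := by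
        simp only [← sum_mul, hcover, one_mul]
    _ = ∑ I ∈ 𝓘, ∑ i ∈ I, w I * f i := sum_comm' fun i I => by simp [and_comm]
    _ ≤ ∑ I ∈ 𝓘, w I * g I := sum_le_sum fun I hI => by
        rw [← mul_sum]; exact mul_le_mul_of_nonneg_left (hfg I hI) (hw I hI)

lemma xos_le_sum_mul_of_fractional_cover {ι β : Type*} [Fintype ι] [DecidableEq ι]
    [DecidableEq α]
    (C : Finset α → ℝ) (A : Finset β) (hA : A.Nonempty) (a : β → α → ℝ)
    (hC : ∀ T, C T = A.sup' hA fun r => ∑ x ∈ T, a r x)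
    (S : ι → Finset α) (hS : Pairwise fun i j => Disjoint (S i) (S j))
    (𝓘 : Finset (Finset ι)) (w : Finset ι → ℝ) (hw : ∀ I ∈ 𝓘, 0 ≤ w I)
    (hcover : ∀ i, ∑ I ∈ 𝓘.filter (i ∈ ·), w I = 1) :
    C (univ.biUnion S) ≤ ∑ I ∈ 𝓘, w I * C (I.biUnion S) := by
  obtain ⟨r, hrA, hr⟩ := exists_mem_eq_sup' hA fun r => ∑ x ∈ univ.biUnion S, a r x
  have hdisj (I : Finset ι) : (I : Set ι).PairwiseDisjoint S := fun i _ j _ hij => hS hij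
  rw [hC, hr, sum_biUnion (hdisj univ)]
  refine sum_le_sum_mul_of_fractional_cover 𝓘 w hw hcover _ _ fun I _ => ?_
  rw [hC, ← sum_biUnion (hdisj I)]
  exact le_sup' (fun r => ∑ x ∈ I.biUnion S, a r x) hrA

lemma potential_eq_sum_potentialWeight_mul [DecidableEq α] (n : ℕ) (C : Finset α → ℝ)
    (S : Fin n → Finset α) :
    potential n C S = ∑ I ∈ (univ : Finset (Fin n)).powerset.filter (· ≠ ∅),
      potentialWeight n #I * C (I.biUnion S) := by
  simp only [potential, potentialWeight, div_eq_inv_mul]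

lemma potential_le_harmonic_mul [DecidableEq α] (n : ℕ) (C : Finset α → ℝ) (hC : Monotone C)
    (S : Fin n → Finset α) :
    potential n C S ≤ harmonic n * C (univ.biUnion S) := by
  rw [potential_eq_sum_potentialWeight_mul, ← sum_potentialWeight_eq_harmonic, sum_mul]
  exact sum_le_sum fun I _ => mul_le_mul_of_nonneg_left
    (hC (biUnion_subset_biUnion_of_subset_left S (subset_univ I))) (potentialWeight_nonneg n #I)

lemma le_potential_of_xos {β : Type*} [DecidableEq α] (n : ℕ) (C : Finset α → ℝ)
    (A : Finset β) (hA : A.Nonempty) (a : β → α → ℝ)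
    (hC : ∀ T, C T = A.sup' hA fun r => ∑ x ∈ T, a r x)
    (S : Fin n → Finset α) (hS : Pairwise fun i j => Disjoint (S i) (S j)) :
    C (univ.biUnion S) ≤ potential n C S := by
  rw [potential_eq_sum_potentialWeight_mul]
  refine xos_le_sum_mul_of_fractional_cover C A hA a hC S hS _ _
    (fun I _ => potentialWeight_nonneg n #I) fun i => ?_
  have hfilter : (univ : Finset (Fin n)).powerset.filter (fun I => I ≠ ∅ ∧ i ∈ I) =
      (univ : Finset (Fin n)).powerset.filter (i ∈ ·) :=
    filter_congr fun I _ => ⟨And.right, fun h => ⟨ne_empty_of_mem h, h⟩⟩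
  rw [filter_filter, hfilter, sum_potentialWeight_filter_mem_eq_one i]

theorem stmt11_general [DecidableEq α] (n : ℕ) (M : Fin n → Finset α)
    (hM : ∀ i j : Fin n, i ≠ j → Disjoint (M i) (M j))
    (C : Finset α → ℝ)
    (hCmono : ∀ S T : Finset α, S ⊆ T → C S ≤ C T)
    (t : ℕ) (ht : 0 < t) (a : Fin t → α → ℝ)
    (hxos : ∀ S : Finset α, C S =
      (univ : Finset (Fin t)).sup' ⟨⟨0, ht⟩, mem_univ _⟩ (fun r => ∑ x ∈ S, a r x))
    (v : Fin n → Finset α → ℝ)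
    (ALG : Fin n → Finset α) (hALGsub : ∀ i, ALG i ⊆ M i)
    (hALGmax : ∀ S : Fin n → Finset α, (∀ i, S i ⊆ M i) →
      ∑ i, v i (S i) - potential n C S ≤ ∑ i, v i (ALG i) - potential n C ALG)
    (OPT : Fin n → Finset α) (hOPT : ∀ i, OPT i ⊆ M i) :
    (∑ i, v i (OPT i) - C (univ.biUnion OPT)) -
        (∑ i, v i (ALG i) - C (univ.biUnion ALG)) ≤
      ((∑ k ∈ Finset.range n, (1 : ℝ) / (k + 1)) - 1) * C (univ.biUnion OPT) := by
  have hALG_disjoint : Pairwise fun i j => Disjoint (ALG i) (ALG j) :=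
    fun i j hij => (hM i j hij).mono (hALGsub i) (hALGsub j)
  have hALG := le_potential_of_xos n C univ _ a hxos ALG hALG_disjoint
  have hOPT_le := potential_le_harmonic_mul n C hCmono OPT
  have hharmonic : (harmonic n : ℝ) = ∑ k ∈ range n, (1 : ℝ) / (k + 1) := by
    simp [harmonic]
  rw [hharmonic] at hOPT_le
  linarith [hALGmax OPT hOPT]

theorem stmt11 [DecidableEq α] (n : ℕ) (M : Fin n → Finset α)
    (hM : ∀ i j : Fin n, i ≠ j → Disjoint (M i) (M j))
    (C : Finset α → ℝ) (hC0 : C ∅ = 0)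
    (hCmono : ∀ S T : Finset α, S ⊆ T → C S ≤ C T)
    (t : ℕ) (ht : 0 < t) (a : Fin t → α → ℝ) (ha : ∀ r x, 0 ≤ a r x)
    (hxos : ∀ S : Finset α, C S =
      (univ : Finset (Fin t)).sup' ⟨⟨0, ht⟩, mem_univ _⟩ (fun r => ∑ x ∈ S, a r x))
    (v : Fin n → Finset α → ℝ) (hv0 : ∀ i, v i ∅ = 0)
    (hvmono : ∀ i, ∀ S T : Finset α, S ⊆ T → T ⊆ M i → v i S ≤ v i T)
    (hvnn : ∀ i S, 0 ≤ v i S)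
    (ALG : Fin n → Finset α) (hALGsub : ∀ i, ALG i ⊆ M i)
    (hALGmax : ∀ S : Fin n → Finset α, (∀ i, S i ⊆ M i) →
      ∑ i, v i (S i) - potential n C S ≤ ∑ i, v i (ALG i) - potential n C ALG)
    (OPT : Fin n → Finset α) (hOPT : ∀ i, OPT i ⊆ M i) :
    (∑ i, v i (OPT i) - C (univ.biUnion OPT)) -
        (∑ i, v i (ALG i) - C (univ.biUnion ALG)) ≤
      ((∑ k ∈ Finset.range n, (1 : ℝ) / (k + 1)) - 1) * C (univ.biUnion OPT) :=
  stmt11_general n M hM C hCmono t ht a hxos v ALG hALGsub hALGmax OPT hOPT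
end

section
/- Suppose C is submodular and each valuation v_i is supermodular (or that n = 2 and valuations are arbitrary monotone functions). Let ALG maximize Σ_j v_j(S_j) − P_C(S) and for each i let ALG^{−i} maximize the same objective subject to player i getting ∅. Then Σ_{i=1}^n [ Σ_j v_j(ALG^{−i}_j) − P_C(ALG^{−i}) ] ≤ (n−1)·[ Σ_j v_j(ALG_j) − P_C(ALG) ]. -/
/-!
The welfare `W S = ∑ⱼ vⱼ(Sⱼ) - P_C(S)` is supermodular on the lattice of feasible allocations
`S ≤ M`, because the `vⱼ` are supermodular and `P_C` is submodular. For feasible `a` and `b`,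
supermodularity gives `W a + W b ≤ W (a ⊔ b) + W (a ⊓ b) ≤ W ALG + W (a ⊓ b)`, so folding in the
allocations `ALG^{-1}, …, ALG^{-n}` one at a time bounds their total welfare by
`(n - 1) W ALG + W (⨅ᵢ ALG^{-i})`, and the meet is the empty allocation. For `n = 2` the two
allocations never share a player's bundle, so the same inequality holds without supermodularity.
-/

open Finset

variable {α : Type*}

section Supermodular

variable {β ι : Type*} [Lattice β] {F : β → ℝ} {top : β} {B : ℝ}

theorem sum_le_card_sub_one_mul_add_inf'
    (hF : ∀ X ≤ top, ∀ Y ≤ top, F X + F Y ≤ F (X ⊔ Y) + F (X ⊓ Y))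
    (hB : ∀ X ≤ top, F X ≤ B) {s : Finset ι} (hs : s.Nonempty) {f : ι → β}
    (hf : ∀ i ∈ s, f i ≤ top) :
    ∑ i ∈ s, F (f i) ≤ ((#s : ℝ) - 1) * B + F (s.inf' hs f) := by
  induction hs using Finset.Nonempty.cons_induction with
  | singleton a => simp
  | cons a s ha hs ih =>
    have hfa : f a ≤ top := hf a (mem_cons_self a s)
    have hinf : s.inf' hs f ≤ top := by
      obtain ⟨i, hi⟩ := hs
      exact (inf'_le f hi).trans (hf i (mem_cons_of_mem hi))
    have ih := ih fun i hi => hf i (mem_cons_of_mem hi)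
    have hsup := hF _ hfa _ hinf
    have hB' := hB _ (sup_le hfa hinf)
    rw [sum_cons, card_cons, inf'_cons hs]
    push_cast
    linarith

end Supermodular

section Welfare

variable [DecidableEq α] {n : ℕ}

noncomputable def welfare (v : Fin n → Finset α → ℝ) (C : Finset α → ℝ) (S : Fin n → Finset α) :
    ℝ :=
  ∑ j, v j (S j) - potential n C S

theorem potential_bot {C : Finset α → ℝ} (hC0 : C ∅ = 0) : potential n C ⊥ = 0 := by
  refine sum_eq_zero fun I _ => ?_
  rw [← sup_eq_biUnion, show (⊥ : Fin n → Finset α) = fun _ => ⊥ from rfl, sup_bot]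
  simp [hC0]

theorem potential_sup_add_potential_inf_le {C : Finset α → ℝ}
    (hCmono : ∀ S T : Finset α, S ⊆ T → C S ≤ C T)
    (hCsub : ∀ S T : Finset α, C (S ∪ T) + C (S ∩ T) ≤ C S + C T)
    (X Y : Fin n → Finset α) :
    potential n C (X ⊔ Y) + potential n C (X ⊓ Y) ≤ potential n C X + potential n C Y := by
  simp only [potential, ← sum_add_distrib, ← add_div]
  refine sum_le_sum fun I _ => div_le_div_of_nonneg_right ?_ (by positivity)
  have hsup : I.biUnion (X ⊔ Y) = I.biUnion X ∪ I.biUnion Y := by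
    simp only [← sup_eq_biUnion, sup_sup, sup_eq_union]
  have hinf : I.biUnion (X ⊓ Y) ⊆ I.biUnion X ∩ I.biUnion Y := by
    simp only [← sup_eq_biUnion, ← inf_eq_inter]
    exact le_inf (sup_mono_fun fun _ _ => inf_le_left) (sup_mono_fun fun _ _ => inf_le_right)
  rw [hsup]
  linarith [hCmono _ _ hinf, hCsub (I.biUnion X) (I.biUnion Y)]

theorem welfare_bot {v : Fin n → Finset α → ℝ} {C : Finset α → ℝ} (hv0 : ∀ i, v i ∅ = 0)
    (hC0 : C ∅ = 0) : welfare v C ⊥ = 0 := by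
  simp [welfare, hv0, potential_bot hC0]

theorem welfare_add_welfare_le {v : Fin n → Finset α → ℝ} {C : Finset α → ℝ}
    (hCmono : ∀ S T : Finset α, S ⊆ T → C S ≤ C T)
    (hCsub : ∀ S T : Finset α, C (S ∪ T) + C (S ∩ T) ≤ C S + C T)
    {X Y : Fin n → Finset α}
    (hv : ∀ j, v j (X j) + v j (Y j) ≤ v j (X j ∪ Y j) + v j (X j ∩ Y j)) :
    welfare v C X + welfare v C Y ≤ welfare v C (X ⊔ Y) + welfare v C (X ⊓ Y) := by
  have hvsum := sum_le_sum fun j (_ : j ∈ univ) => hv j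
  simp only [sum_add_distrib] at hvsum
  have := potential_sup_add_potential_inf_le hCmono hCsub X Y
  simp only [welfare, Pi.sup_apply, Pi.inf_apply, sup_eq_union, inf_eq_inter]
  linarith

end Welfare

theorem stmt13_general [DecidableEq α] (n : ℕ) (M : Fin n → Finset α)
    (C : Finset α → ℝ) (hC0 : C ∅ = 0)
    (hCmono : ∀ S T : Finset α, S ⊆ T → C S ≤ C T)
    (hCsub : ∀ S T : Finset α, C (S ∪ T) + C (S ∩ T) ≤ C S + C T)
    (v : Fin n → Finset α → ℝ) (hv0 : ∀ i, v i ∅ = 0)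
    (hcase : (∀ i, ∀ S T : Finset α, S ⊆ M i → T ⊆ M i →
        v i S + v i T ≤ v i (S ∪ T) + v i (S ∩ T)) ∨ n = 2)
    (ALG : Fin n → Finset α)
    (hALGmax : ∀ S : Fin n → Finset α, (∀ i, S i ⊆ M i) →
      ∑ j, v j (S j) - potential n C S ≤ ∑ j, v j (ALG j) - potential n C ALG)
    (A : Fin n → Fin n → Finset α) (hAsub : ∀ i j, A i j ⊆ M j)
    (hAii : ∀ i, A i i = ∅) :
    ∑ i, (∑ j, v j (A i j) - potential n C (A i)) ≤
      ((n : ℝ) - 1) * (∑ j, v j (ALG j) - potential n C ALG) := by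
  have hALG : ∀ S ≤ M, welfare v C S ≤ welfare v C ALG := hALGmax
  change ∑ i, welfare v C (A i) ≤ ((n : ℝ) - 1) * welfare v C ALG
  rcases hcase with hvsup | rfl
  · rcases n.eq_zero_or_pos with rfl | hn
    · simp [Subsingleton.elim ALG ⊥, welfare_bot hv0 hC0]
    have hne : (univ : Finset (Fin n)).Nonempty := univ_nonempty_iff.2 ⟨⟨0, hn⟩⟩
    have hmeet : univ.inf' hne A = ⊥ :=
      eq_bot_iff.2 fun j => (hAii j ▸ inf'_le A (mem_univ j) j :)
    have hsuper : ∀ X ≤ M, ∀ Y ≤ M,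
        welfare v C X + welfare v C Y ≤ welfare v C (X ⊔ Y) + welfare v C (X ⊓ Y) :=
      fun X hX Y hY => welfare_add_welfare_le hCmono hCsub fun j =>
        hvsup j _ _ (Pi.le_def.1 hX j) (Pi.le_def.1 hY j)
    have key := sum_le_card_sub_one_mul_add_inf' hsuper hALG hne fun i _ => hAsub i
    simpa [hmeet, welfare_bot hv0 hC0] using key
  · have hdisjoint : ∀ j,
        v j (A 0 j) + v j (A 1 j) ≤ v j (A 0 j ∪ A 1 j) + v j (A 0 j ∩ A 1 j) := by
      intro j
      fin_cases j <;> simp [hAii, hv0]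
    have hmeet : A 0 ⊓ A 1 = ⊥ := by
      ext j : 1
      fin_cases j <;> simp [hAii]
    have key := welfare_add_welfare_le hCmono hCsub hdisjoint
    have hsup := hALG (A 0 ⊔ A 1) (sup_le (hAsub 0) (hAsub 1))
    rw [hmeet, welfare_bot hv0 hC0] at key
    norm_num [Fin.sum_univ_two]
    linarith

theorem stmt13 [DecidableEq α] (n : ℕ) (M : Fin n → Finset α)
    (hM : ∀ i j : Fin n, i ≠ j → Disjoint (M i) (M j))
    (C : Finset α → ℝ) (hC0 : C ∅ = 0) (hCnn : ∀ S, 0 ≤ C S)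
    (hCmono : ∀ S T : Finset α, S ⊆ T → C S ≤ C T)
    (hCsub : ∀ S T : Finset α, C (S ∪ T) + C (S ∩ T) ≤ C S + C T)
    (v : Fin n → Finset α → ℝ) (hv0 : ∀ i, v i ∅ = 0)
    (hvmono : ∀ i, ∀ S T : Finset α, S ⊆ T → T ⊆ M i → v i S ≤ v i T)
    (hcase : (∀ i, ∀ S T : Finset α, S ⊆ M i → T ⊆ M i →
        v i S + v i T ≤ v i (S ∪ T) + v i (S ∩ T)) ∨ n = 2)
    (ALG : Fin n → Finset α) (hALGsub : ∀ i, ALG i ⊆ M i)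
    (hALGmax : ∀ S : Fin n → Finset α, (∀ i, S i ⊆ M i) →
      ∑ j, v j (S j) - potential n C S ≤ ∑ j, v j (ALG j) - potential n C ALG)
    (A : Fin n → Fin n → Finset α) (hAsub : ∀ i j, A i j ⊆ M j)
    (hAii : ∀ i, A i i = ∅)
    (hAmax : ∀ i, ∀ S : Fin n → Finset α, (∀ j, S j ⊆ M j) → S i = ∅ →
      ∑ j, v j (S j) - potential n C S ≤ ∑ j, v j (A i j) - potential n C (A i)) :
    ∑ i, (∑ j, v j (A i j) - potential n C (A i)) ≤
      ((n : ℝ) - 1) * (∑ j, v j (ALG j) - potential n C ALG) :=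
  stmt13_general n M C hC0 hCmono hCsub v hv0 hcase ALG hALGmax A hAsub hAii
end

section
/- In the excludable public good problem, let A be a VCG-based mechanism outputting argmax_{S⊆N} Σ_{i∈S} v_i − H(S) with H normalized, monotone and symmetric, charging VCG payments, and suppose A always covers the cost and provides a finite approximation ratio to the social cost. Then for every nonempty S ⊆ N and every i ∈ S, H(S) − H(S−{i}) ≥ 1/|S|. Consequently H(S) ≥ H_{|S|} for every S. -/
open Finset

theorem stmt15 (n : ℕ) (hn : 1 ≤ n)
    (H : Finset (Fin n) → ℝ) (hH0 : H ∅ = 0) (hHnn : ∀ S, 0 ≤ H S)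
    (hHmono : ∀ S T : Finset (Fin n), S ⊆ T → H S ≤ H T)
    (hHsym : ∀ S T : Finset (Fin n), S.card = T.card → H S = H T)
    (C : Finset (Fin n) → ℝ) (hC : ∀ S : Finset (Fin n), C S = if S = ∅ then 0 else 1)
    (ALG : (Fin n → ℝ) → Finset (Fin n))
    (A : (Fin n → ℝ) → Fin n → Finset (Fin n))
    (hALGmax : ∀ v : Fin n → ℝ, (∀ i, 0 ≤ v i) → ∀ S : Finset (Fin n),
      ∑ i ∈ S, v i - H S ≤ ∑ i ∈ ALG v, v i - H (ALG v))
    (hAnoti : ∀ v i, i ∉ A v i)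
    (hAmax : ∀ v : Fin n → ℝ, (∀ i, 0 ≤ v i) → ∀ i, ∀ S : Finset (Fin n), i ∉ S →
      ∑ j ∈ S, v j - H S ≤ ∑ j ∈ A v i, v j - H (A v i))
    (p : (Fin n → ℝ) → Fin n → ℝ)
    (hp : ∀ v i, p v i = (∑ j ∈ A v i, v j - H (A v i)) -
      (∑ j ∈ (ALG v).erase i, v j - H (ALG v)))
    (hcover : ∀ v : Fin n → ℝ, (∀ i, 0 ≤ v i) → C (ALG v) ≤ ∑ i, p v i)
    (ρ : ℝ)
    (happrox : ∀ v : Fin n → ℝ, (∀ i, 0 ≤ v i) → ∀ S : Finset (Fin n),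
      C (ALG v) + ∑ i ∈ univ \ ALG v, v i ≤ ρ * (C S + ∑ i ∈ univ \ S, v i)) :
    (∀ S : Finset (Fin n), S.Nonempty → ∀ i ∈ S,
      1 / (S.card : ℝ) ≤ H S - H (S.erase i)) ∧
    ∀ S : Finset (Fin n), ∑ k ∈ Finset.range S.card, (1 : ℝ) / (k + 1) ≤ H S := by
  have key : ∀ S : Finset (Fin n), S.Nonempty → ∀ i ∈ S,
      1 / (S.card : ℝ) ≤ H S - H (S.erase i) := by
    intro S hS i hi
    by_contra hcon
    push_neg at hcon
    have hk1 : 1 ≤ S.card := hS.card_pos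
    have hkR : (0:ℝ) < (S.card : ℝ) := by exact_mod_cast hS.card_pos
    set δ : ℝ := H S - H (S.erase i) with hδ
    have hkδ : (S.card : ℝ) * δ < 1 := by
      rw [lt_div_iff₀ hkR] at hcon
      linarith
    set c : ℝ := H S + 1 with hc
    have hc1 : 1 ≤ c := by have := hHnn S; linarith
    have hcnn : (0:ℝ) ≤ c := by linarith
    set v : Fin n → ℝ := fun j => if j ∈ S then c else 0 with hv
    have hvnn : ∀ j, 0 ≤ v j := by
      intro j; simp only [hv]; split <;> linarith
    -- sum of v over any set
    have sumv : ∀ T : Finset (Fin n), ∑ j ∈ T, v j = c * ((T ∩ S).card : ℝ) := by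
      intro T
      simp only [hv]
      rw [Finset.sum_ite_mem, Finset.sum_const, nsmul_eq_mul, mul_comm]
    -- Lemma A: strict bound for sets missing part of S
    have lemA : ∀ T : Finset (Fin n), (T ∩ S).card < S.card →
        ∑ j ∈ T, v j - H T ≤ c * (S.card : ℝ) - H S - 1 := by
      intro T hm
      rw [sumv]
      have hm1 : ((T ∩ S).card : ℝ) + 1 ≤ (S.card : ℝ) := by exact_mod_cast hm
      have h1 : (0:ℝ) ≤ c * ((S.card : ℝ) - ((T ∩ S).card : ℝ) - 1) :=
        mul_nonneg hcnn (by linarith)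
      linarith [hHnn T]
    have lemA' : ∀ T : Finset (Fin n), ∑ j ∈ T, v j - H T ≤ c * (S.card : ℝ) - H S := by
      intro T
      by_cases hm : (T ∩ S).card < S.card
      · linarith [lemA T hm]
      · have hme : (T ∩ S).card = S.card := le_antisymm
          (card_le_card (inter_subset_right)) (le_of_not_gt hm)
        have hTS : T ∩ S = S := Finset.eq_of_subset_of_card_le inter_subset_right
          (le_of_eq hme.symm)
        have hsub : S ⊆ T := by
          intro x hx
          have hx' : x ∈ T ∩ S := by rw [hTS]; exact hx
          exact (mem_inter.mp hx').1
        rw [sumv, hTS]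
        have := hHmono S T hsub
        linarith
    -- Lemma B: for j ∈ S, sets avoiding j have welfare ≤ c*(k-1) - H (S.erase j)
    have lemB : ∀ j ∈ S, ∀ T : Finset (Fin n), j ∉ T →
        ∑ x ∈ T, v x - H T ≤ c * ((S.card : ℝ) - 1) - H (S.erase j) := by
      intro j hj T hjT
      have hsub : T ∩ S ⊆ S.erase j := by
        intro x hx
        rcases mem_inter.mp hx with ⟨hxT, hxS⟩
        exact mem_erase.mpr ⟨fun h => hjT (h ▸ hxT), hxS⟩
      have hcard : (T ∩ S).card ≤ S.card - 1 := by
        have := card_le_card hsub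
        rwa [card_erase_of_mem hj] at this
      rw [sumv]
      by_cases hm : (T ∩ S).card = S.card - 1
      · have hTS : T ∩ S = S.erase j := Finset.eq_of_subset_of_card_le hsub
          (by rw [card_erase_of_mem hj, hm])
        have hmono : H (S.erase j) ≤ H T := by
          rw [← hTS]; exact hHmono _ _ inter_subset_left
        have hmR : ((T ∩ S).card : ℝ) = (S.card : ℝ) - 1 := by
          rw [hm, Nat.cast_sub hk1, Nat.cast_one]
        rw [hmR]
        linarith
      · have hlt : (T ∩ S).card < S.card - 1 := lt_of_le_of_ne hcard hm
        have hm1 : ((T ∩ S).card : ℝ) + 1 ≤ (S.card : ℝ) - 1 := by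
          have h3 : (T ∩ S).card + 2 ≤ S.card := by omega
          have h4 := (Nat.cast_le (α := ℝ)).mpr h3
          push_cast at h4
          linarith
        have hHe : H (S.erase j) ≤ H S := hHmono _ _ (erase_subset j S)
        have h1 : c * 1 ≤ c * ((S.card : ℝ) - 1 - ((T ∩ S).card : ℝ)) :=
          mul_le_mul_of_nonneg_left (by linarith) hcnn
        linarith [hHnn T]
    -- analyze ALG v
    set T := ALG v with hT
    have hWlow : c * (S.card : ℝ) - H S ≤ ∑ j ∈ T, v j - H T := by
      have h6 := hALGmax v hvnn S
      rw [sumv S] at h6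
      simp only [inter_self] at h6
      exact h6
    have hmT : (T ∩ S).card = S.card := by
      by_contra hne
      have hlt : (T ∩ S).card < S.card :=
        lt_of_le_of_ne (card_le_card inter_subset_right) hne
      linarith [lemA T hlt]
    have hTS : T ∩ S = S := Finset.eq_of_subset_of_card_le inter_subset_right
      (le_of_eq hmT.symm)
    have hsubST : S ⊆ T := by
      intro x hx
      have hx' : x ∈ T ∩ S := by rw [hTS]; exact hx
      exact (mem_inter.mp hx').1
    have hsumT : ∑ j ∈ T, v j = c * (S.card : ℝ) := by rw [sumv, hTS]
    have hHT : H T = H S := by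
      have h1 : H S ≤ H T := hHmono _ _ hsubST
      have h2 : H T ≤ H S := by rw [hsumT] at hWlow; linarith
      linarith
    have hTne : T ≠ ∅ := by
      intro h
      rcases hS with ⟨x, hx⟩
      have hxT := hsubST hx
      rw [h] at hxT
      exact absurd hxT (notMem_empty x)
    -- payment bounds
    have hpb : ∀ j : Fin n, p v j ≤ if j ∈ S then δ else 0 := by
      intro j
      rw [hp]
      by_cases hjS : j ∈ S
      · simp only [hjS, if_true]
        have hjT : j ∈ T := hsubST hjS
        have hsumE : ∑ x ∈ T.erase j, v x = c * (S.card : ℝ) - c := by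
          have h7 := Finset.sum_erase_add T v hjT
          have hvj : v j = c := by simp [hv, hjS]
          rw [hvj] at h7
          linarith [h7, hsumT]
        have hB := lemB j hjS (A v j) (hAnoti v j)
        have hsymE : H (S.erase j) = H (S.erase i) := hHsym _ _ (by
          rw [card_erase_of_mem hjS, card_erase_of_mem hi])
        rw [← hT, hsumE, hHT]
        rw [hsymE] at hB
        linarith
      · simp only [hjS, if_false]
        have hErase : (T.erase j) ∩ S = T ∩ S := by
          ext x
          simp only [mem_inter, mem_erase]
          constructor
          · rintro ⟨⟨_, hx⟩, hxS⟩; exact ⟨hx, hxS⟩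
          · rintro ⟨hx, hxS⟩; exact ⟨⟨fun h => hjS (h ▸ hxS), hx⟩, hxS⟩
        have hsumE : ∑ x ∈ T.erase j, v x = c * (S.card : ℝ) := by
          rw [sumv, hErase, hTS]
        have hA := lemA' (A v j)
        rw [← hT, hsumE, hHT]
        linarith
    -- sum payments
    have hsump : ∑ j, p v j ≤ (S.card : ℝ) * δ := by
      calc ∑ j, p v j ≤ ∑ j : Fin n, (if j ∈ S then δ else 0) :=
            Finset.sum_le_sum (fun j _ => hpb j)
        _ = (S.card : ℝ) * δ := by
            rw [Finset.sum_ite_mem, Finset.sum_const, nsmul_eq_mul, univ_inter]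
    have hcov := hcover v hvnn
    rw [hC, ← hT, if_neg hTne] at hcov
    linarith
  refine ⟨key, ?_⟩
  intro S
  induction S using Finset.strongInduction with
  | _ S ih =>
    rcases S.eq_empty_or_nonempty with rfl | hS
    · simp [hH0]
    · obtain ⟨i, hi⟩ := hS
      obtain ⟨m, hm⟩ : ∃ m, S.card = m + 1 :=
        ⟨S.card - 1, (Nat.succ_pred_eq_of_pos (card_pos.mpr ⟨i, hi⟩)).symm⟩
      have hme : (S.erase i).card = m := by
        rw [card_erase_of_mem hi, hm]
        omega
      have h2 := ih (S.erase i) (erase_ssubset hi)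
      rw [hme] at h2
      have h1 := key S ⟨i, hi⟩ i hi
      rw [hm, Finset.sum_range_succ]
      have hcast : (S.card : ℝ) = (m : ℝ) + 1 := by rw [hm]; push_cast; ring
      rw [hcast] at h1
      linarith
end

section
/- Consider the Sequential Mechanism for a subadditive monotone normalized cost function C: players arrive in order 1,…,n, and player i is allocated a bundle ALG_i ∈ argmax_{S⊆M_i} [v_i(S) − (C(ALG_1,…,ALG_{i−1},S) − C(ALG_1,…,ALG_{i−1}))] and pays that marginal cost. Then for every allocation OPT, the social cost satisfies π(ALG) ≤ n·π(OPT), where π(S) = C(S) + Σ_i [v_i(M_i) − v_i(S_i)]. -/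
/-! Since `C ∅ = 0`, the cost `C(ALG)` telescopes into the marginal costs paid by the players.
Player `i` could have taken `OPT i` instead, whose marginal cost is at most `C (OPT i)` by
subadditivity; so `i`'s payment plus value loss is at most `C (OPT i)` plus `i`'s loss under
`OPT`, which is at most `π(OPT)`. Summing over the `n` players gives the bound. -/

open Finset

variable {α : Type*}

namespace SequentialMechanism

variable [DecidableEq α] {n : ℕ}

/-- Indexed by `ℕ` rather than `Fin n` so that the prefixes telescope via `sum_range_sub`. -/
def allocatedBefore (A : Fin n → Finset α) (k : ℕ) : Finset α :=
  (univ.filter fun j : Fin n => (j : ℕ) < k).biUnion A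

def socialCost (C : Finset α → ℝ) (v : Fin n → Finset α → ℝ) (M A : Fin n → Finset α) :
    ℝ :=
  C (univ.biUnion A) + ∑ i, (v i (M i) - v i (A i))

lemma allocatedBefore_zero (A : Fin n → Finset α) : allocatedBefore A 0 = ∅ := by
  simp [allocatedBefore]

lemma allocatedBefore_self (A : Fin n → Finset α) : allocatedBefore A n = univ.biUnion A := by
  simp [allocatedBefore]

lemma allocatedBefore_val (A : Fin n → Finset α) (i : Fin n) :
    allocatedBefore A i = (univ.filter (· < i)).biUnion A := by
  simp only [allocatedBefore, Fin.lt_def]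

lemma allocatedBefore_succ (A : Fin n → Finset α) (i : Fin n) :
    allocatedBefore A (i + 1) = allocatedBefore A i ∪ A i := by
  have : (univ.filter fun j : Fin n => (j : ℕ) < i + 1) =
      insert i (univ.filter fun j : Fin n => (j : ℕ) < i) := by
    ext j
    simp only [mem_filter, mem_univ, true_and, mem_insert, Fin.ext_iff]
    omega
  rw [allocatedBefore, this, biUnion_insert, union_comm]
  rfl

lemma sum_marginal_eq {f : Finset α → ℝ} (hf : f ∅ = 0) (A : Fin n → Finset α) :
    ∑ i : Fin n, (f (allocatedBefore A i ∪ A i) - f (allocatedBefore A i)) =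
      f (univ.biUnion A) := by
  simp_rw [← allocatedBefore_succ]
  rw [Fin.sum_univ_eq_sum_range (fun k => f (allocatedBefore A (k + 1)) - f (allocatedBefore A k)),
    sum_range_sub (fun k => f (allocatedBefore A k)), allocatedBefore_self,
    allocatedBefore_zero, hf, sub_zero]

lemma socialCost_eq_sum_marginal {C : Finset α → ℝ} (hC0 : C ∅ = 0)
    (v : Fin n → Finset α → ℝ) (M A : Fin n → Finset α) :
    socialCost C v M A =
      ∑ i : Fin n, ((C (allocatedBefore A i ∪ A i) - C (allocatedBefore A i)) +
        (v i (M i) - v i (A i))) := by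
  rw [sum_add_distrib, sum_marginal_eq hC0, socialCost]

lemma marginal_add_loss_le {C : Finset α → ℝ}
    (hsubadd : ∀ S T : Finset α, C (S ∪ T) ≤ C S + C T) {u : Finset α → ℝ} (w : ℝ)
    {P A O : Finset α}
    (hbest : u O - (C (P ∪ O) - C P) ≤ u A - (C (P ∪ A) - C P)) :
    (C (P ∪ A) - C P) + (w - u A) ≤ C O + (w - u O) := by
  linarith [hsubadd P O]

lemma cost_add_loss_le_socialCost {C : Finset α → ℝ}
    (hCmono : ∀ S T : Finset α, S ⊆ T → C S ≤ C T) {v : Fin n → Finset α → ℝ}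
    {M : Fin n → Finset α}
    (hvmono : ∀ i, ∀ S T : Finset α, S ⊆ T → T ⊆ M i → v i S ≤ v i T)
    {O : Fin n → Finset α} (hO : ∀ i, O i ⊆ M i) (i : Fin n) :
    C (O i) + (v i (M i) - v i (O i)) ≤ socialCost C v M O := by
  have hloss : v i (M i) - v i (O i) ≤ ∑ j, (v j (M j) - v j (O j)) :=
    single_le_sum (fun j _ => sub_nonneg.mpr (hvmono j _ _ (hO j) subset_rfl)) (mem_univ i)
  rw [socialCost]
  linarith [hCmono _ _ (subset_biUnion_of_mem O (mem_univ i))]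

end SequentialMechanism

open SequentialMechanism in
theorem stmt18_general [DecidableEq α] (n : ℕ) (M : Fin n → Finset α)
    (C : Finset α → ℝ) (hC0 : C ∅ = 0)
    (hCmono : ∀ S T : Finset α, S ⊆ T → C S ≤ C T)
    (hsubadd : ∀ S T : Finset α, C (S ∪ T) ≤ C S + C T)
    (v : Fin n → Finset α → ℝ)
    (hvmono : ∀ i, ∀ S T : Finset α, S ⊆ T → T ⊆ M i → v i S ≤ v i T)
    (ALG : Fin n → Finset α)
    (hgreedy : ∀ i : Fin n, ∀ S : Finset α, S ⊆ M i →
      v i S - (C ((univ.filter (· < i)).biUnion ALG ∪ S) -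
          C ((univ.filter (· < i)).biUnion ALG)) ≤
        v i (ALG i) - (C ((univ.filter (· < i)).biUnion ALG ∪ ALG i) -
          C ((univ.filter (· < i)).biUnion ALG)))
    (OPT : Fin n → Finset α) (hOPT : ∀ i, OPT i ⊆ M i) :
    C (univ.biUnion ALG) + ∑ i, (v i (M i) - v i (ALG i)) ≤
      (n : ℝ) * (C (univ.biUnion OPT) + ∑ i, (v i (M i) - v i (OPT i))) := by
  change socialCost C v M ALG ≤ n * socialCost C v M OPT
  have hstep : ∀ i : Fin n, (C (allocatedBefore ALG i ∪ ALG i) - C (allocatedBefore ALG i)) +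
      (v i (M i) - v i (ALG i)) ≤ socialCost C v M OPT := by
    intro i
    rw [allocatedBefore_val]
    exact (marginal_add_loss_le hsubadd _ (hgreedy i (OPT i) (hOPT i))).trans
      (cost_add_loss_le_socialCost hCmono hvmono hOPT i)
  calc socialCost C v M ALG
      = ∑ i : Fin n, ((C (allocatedBefore ALG i ∪ ALG i) - C (allocatedBefore ALG i)) +
          (v i (M i) - v i (ALG i))) := socialCost_eq_sum_marginal hC0 v M ALG
    _ ≤ ∑ _i : Fin n, socialCost C v M OPT := sum_le_sum fun i _ => hstep i
    _ = n * socialCost C v M OPT := by simp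

theorem stmt18 [DecidableEq α] (n : ℕ) (M : Fin n → Finset α)
    (hM : ∀ i j : Fin n, i ≠ j → Disjoint (M i) (M j))
    (C : Finset α → ℝ) (hC0 : C ∅ = 0) (hCnn : ∀ S, 0 ≤ C S)
    (hCmono : ∀ S T : Finset α, S ⊆ T → C S ≤ C T)
    (hsubadd : ∀ S T : Finset α, C (S ∪ T) ≤ C S + C T)
    (v : Fin n → Finset α → ℝ) (hv0 : ∀ i, v i ∅ = 0) (hvnn : ∀ i S, 0 ≤ v i S)
    (hvmono : ∀ i, ∀ S T : Finset α, S ⊆ T → T ⊆ M i → v i S ≤ v i T)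
    (ALG : Fin n → Finset α) (hALGsub : ∀ i, ALG i ⊆ M i)
    (hgreedy : ∀ i : Fin n, ∀ S : Finset α, S ⊆ M i →
      v i S - (C ((univ.filter (· < i)).biUnion ALG ∪ S) -
          C ((univ.filter (· < i)).biUnion ALG)) ≤
        v i (ALG i) - (C ((univ.filter (· < i)).biUnion ALG ∪ ALG i) -
          C ((univ.filter (· < i)).biUnion ALG)))
    (OPT : Fin n → Finset α) (hOPT : ∀ i, OPT i ⊆ M i) :
    C (univ.biUnion ALG) + ∑ i, (v i (M i) - v i (ALG i)) ≤
      (n : ℝ) * (C (univ.biUnion OPT) + ∑ i, (v i (M i) - v i (OPT i))) :=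
  stmt18_general n M C hC0 hCmono hsubadd v hvmono ALG hgreedy OPT hOPT
end

section
/- For the potential function on allocations, the marginal value P_C(S) − P_C(S − S_i) equals the Shapley value of player i in the cooperative game (N, C') where C'(T) = C(∪_{j∈T} S_j): that is, P_C(S) − P_C(S − S_i) = Σ_{T ⊆ N−{i}} [|T|!·(n−|T|−1)!/n!] · (C'(T∪{i}) − C'(T)). -/
open Finset

variable {α : Type*}

/-! Split the coalitions `I` in the potential according to whether they contain `i`. Those that
do not contribute equally to both potentials; writing the others as `I = insert i T`, the
weight `1 / (|I| · binom(n, |I|))` is exactly the Shapley weight `|T|! (n - |T| - 1)! / n!`. -/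

open Nat in
lemma factorial_mul_factorial_div_factorial_eq_one_div_succ_mul_choose {n t : ℕ} (h : t < n) :
    (t ! * (n - t - 1)! / n ! : ℝ) = 1 / ((t + 1 : ℕ) * n.choose (t + 1)) := by
  rw [cast_choose ℝ h, show n - (t + 1) = n - t - 1 by omega, factorial_succ]
  have : (n ! : ℝ) ≠ 0 := cast_ne_zero.2 (factorial_pos n).ne'
  field_simp
  push_cast
  ring

lemma sum_powerset_univ_eq_sum_powerset_erase {ι M : Type*} [Fintype ι] [DecidableEq ι]
    [AddCommMonoid M] (f : Finset ι → M) (i : ι) :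
    ∑ I ∈ (univ : Finset ι).powerset, f I =
      ∑ T ∈ (univ.erase i).powerset, (f T + f (insert i T)) := by
  conv_lhs => rw [← insert_erase (mem_univ i)]
  rw [sum_powerset_insert (notMem_erase i univ), sum_add_distrib]

section

variable {ι : Type*} [DecidableEq ι] [DecidableEq α]

lemma biUnion_update_empty_of_notMem (S : ι → Finset α) {i : ι} {T : Finset ι}
    (hi : i ∉ T) :
    T.biUnion (Function.update S i ∅) = T.biUnion S :=
  biUnion_congr rfl fun _ hj => Function.update_of_ne (ne_of_mem_of_not_mem hj hi) _ _

lemma biUnion_insert_update_empty (S : ι → Finset α) {i : ι} {T : Finset ι} (hi : i ∉ T) :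
    (insert i T).biUnion (Function.update S i ∅) = T.biUnion S := by
  rw [biUnion_insert, Function.update_self, empty_union,
    biUnion_update_empty_of_notMem S hi]

end

/-- The side condition `I ≠ ∅` in `potential` is harmless: at `I = ∅` the denominator is `0`,
and division by zero gives `0`. -/
lemma potential_eq_sum_powerset [DecidableEq α] (n : ℕ) (C : Finset α → ℝ)
    (S : Fin n → Finset α) :
    potential n C S = ∑ I ∈ (univ : Finset (Fin n)).powerset,
      C (I.biUnion S) / ((I.card : ℝ) * (n.choose I.card : ℝ)) :=
  sum_filter_of_ne fun I _ hI hI₀ => hI (by simp [hI₀])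

theorem stmt19_general [DecidableEq α] (n : ℕ) (C : Finset α → ℝ) (S : Fin n → Finset α)
    (i : Fin n) :
    potential n C S - potential n C (Function.update S i ∅) =
      ∑ T ∈ ((univ : Finset (Fin n)).erase i).powerset,
        ((T.card.factorial : ℝ) * ((n - T.card - 1).factorial : ℝ) /
            (n.factorial : ℝ)) *
          (C ((insert i T).biUnion S) - C (T.biUnion S)) := by
  rw [potential_eq_sum_powerset, potential_eq_sum_powerset,
    sum_powerset_univ_eq_sum_powerset_erase _ i, sum_powerset_univ_eq_sum_powerset_erase _ i,
    ← sum_sub_distrib]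
  refine sum_congr rfl fun T hT => ?_
  have hi : i ∉ T := fun h => notMem_erase i univ (mem_powerset.1 hT h)
  have hcard : T.card < n := by
    simpa using card_lt_card (Finset.ssubset_of_subset_of_ssubset (mem_powerset.1 hT)
      (erase_ssubset (mem_univ i)))
  rw [biUnion_update_empty_of_notMem S hi, biUnion_insert_update_empty S hi,
    card_insert_of_notMem hi,
    factorial_mul_factorial_div_factorial_eq_one_div_succ_mul_choose hcard]
  ring

theorem stmt19 [DecidableEq α] (n : ℕ) (M : Fin n → Finset α)
    (hM : ∀ i j : Fin n, i ≠ j → Disjoint (M i) (M j))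
    (C : Finset α → ℝ) (hC0 : C ∅ = 0)
    (S : Fin n → Finset α) (hS : ∀ i, S i ⊆ M i) (i : Fin n) :
    potential n C S - potential n C (Function.update S i ∅) =
      ∑ T ∈ ((univ : Finset (Fin n)).erase i).powerset,
        ((T.card.factorial : ℝ) * ((n - T.card - 1).factorial : ℝ) /
            (n.factorial : ℝ)) *
          (C ((insert i T).biUnion S) - C (T.biUnion S)) :=
  stmt19_general n C S i
end
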